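/- For all integers 1 ≤ n ≤ m, ρ(n) + ρ(m) − log_φ n ≤ ρ(m+n), where φ = (1+√5)/2 is the golden ratio and log_φ the logarithm in base φ. -/

import Mathlib

/-- The factor `w[i..j]` of `w`, with 1-based inclusive indices. -/
def factor (w : List Bool) (i j : ℕ) : List Bool :=
  (w.drop (i - 1)).take (j + 1 - i)

/-- `p` is a period of `w` (1-based: `w[k+p] = w[k]` for `1 ≤ k ≤ |w| - p`). -/
def IsPeriod (w : List Bool) (p : ℕ) : Prop :=
  1 ≤ p ∧ ∀ k, k + p < w.length → w[k]? = w[k + p]?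

/-- The least period of `w`. -/
noncomputable def leastPeriod (w : List Bool) : ℕ := sInf {p | IsPeriod w p}

/-- `p` is the least period of `w`. -/
def IsLeastPeriod (w : List Bool) (p : ℕ) : Prop :=
  IsPeriod w p ∧ ∀ q, IsPeriod w q → p ≤ q

/-- The lexicographic order `≺_c` on binary words in which the letter `c` is smaller. -/
def LexLt (c : Bool) : List Bool → List Bool → Prop :=
  List.Lex (fun a b => a = c ∧ b = !c)

/-- `w` is a `≺_c`-Lyndon word. -/
def IsLyndon (c : Bool) (w : List Bool) : Prop :=
  w ≠ [] ∧ ∀ u v : List Bool, u ≠ [] → v ≠ [] → w = u ++ v →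
    w ≠ v ++ u ∧ LexLt c w (v ++ u)

/-- `w` is primitive: it is not a power of a shorter word. -/
def Primitive (w : List Bool) : Prop :=
  w ≠ [] ∧ ∀ (u : List Bool) (k : ℕ), u.length < w.length → w ≠ (List.replicate k u).flatten

/-- `w` and `w'` are conjugate words. -/
def Conjugate (w w' : List Bool) : Prop := ∃ u v, w = u ++ v ∧ w' = v ++ u

/-- The interval `[i..j]` (1-based) is a run of `w`. -/
def IsRun (w : List Bool) (i j : ℕ) : Prop :=
  1 ≤ i ∧ i < j ∧ j ≤ w.length ∧
  2 * leastPeriod (factor w i j) ≤ j - i + 1 ∧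
  (i = 1 ∨ w[i - 2]? ≠ w[i - 2 + leastPeriod (factor w i j)]?) ∧
  (j = w.length ∨ w[j]? ≠ w[j - leastPeriod (factor w i j)]?)

/-- `c_w(i)`: the letter different from `w[i-1]` (1-based). -/
def cpar (w : List Bool) (i : ℕ) : Bool := !(w.getD (i - 2) false)

/-- `L_w(i)`: the largest `j` such that `w[i..j]` is `≺_{c_w(i)}`-Lyndon. -/
noncomputable def Lpar (w : List Bool) (i : ℕ) : ℕ :=
  sSup {j | j ≤ w.length ∧ IsLyndon (cpar w i) (factor w i j)}

/-- `D_w(i) = L_w(i) - i + 1`. -/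
noncomputable def Dpar (w : List Bool) (i : ℕ) : ℕ := Lpar w i + 1 - i

/-- `ST_w(i)`: the least `j` such that `D_w(i)` is a period of `w[j..L_w(i)]`. -/
noncomputable def STpar (w : List Bool) (i : ℕ) : ℕ :=
  sInf {j | 1 ≤ j ∧ IsPeriod (factor w j (Lpar w i)) (Dpar w i)}

/-- `E_w(i)`: the largest `j` such that `D_w(i)` is a period of `w[i..j]`. -/
noncomputable def Epar (w : List Bool) (i : ℕ) : ℕ :=
  sSup {j | j ≤ w.length ∧ IsPeriod (factor w i j) (Dpar w i)}

/-- `R_w(i) = [ST_w(i)..E_w(i)]`. -/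
noncomputable def Rmap (w : List Bool) (i : ℕ) : ℕ × ℕ := (STpar w i, Epar w i)

/-- `r_w(c)` for the run `[s..e]`: the least `i` with `R_w(i) = [s..e]` and
`w[i..L_w(i)]` a `≺_c`-Lyndon word. -/
noncomputable def rpar (w : List Bool) (s e : ℕ) (c : Bool) : ℕ :=
  sInf {i | Rmap w i = (s, e) ∧ IsLyndon c (factor w i (Lpar w i))}

/-- `f_w([s..e])`: the letter `c` with `r_w(c) ≥ r_w(c̄)` (`0` if the least period is one). -/
noncomputable def fpar (w : List Bool) (s e : ℕ) : Bool :=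
  if leastPeriod (factor w s e) = 1 then false
  else if rpar w s e false ≤ rpar w s e true then true else false

/-- The position `i` (1-based, `1 < i ≤ |w|`) is lost in `w`. -/
def Lost (w : List Bool) (i : ℕ) : Prop :=
  1 < i ∧ i ≤ w.length ∧
  ((Epar w i < w.length ∧ 1 < STpar w i ∧ ¬ IsRun w (STpar w i) (Epar w i)) ∨
   (Epar w i < w.length ∧ IsRun w (STpar w i) (Epar w i) ∧ i + Dpar w i ≤ Epar w i) ∨
   (Epar w i = w.length ∧ IsRun w (STpar w i) (Epar w i) ∧ i + Dpar w i ≤ Epar w i ∧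
     STpar w i < i ∧
     IsLyndon (fpar w (STpar w i) (Epar w i)) (factor w i (Lpar w i))))

/-- The number of lost positions of `w` that are `≤ p`. -/
noncomputable def lostCount (w : List Bool) (p : ℕ) : ℕ := {q | Lost w q ∧ q ≤ p}.ncard

/-- The prefix-frequency predicate `P_d(w)`: every lost position `p` of `w`, being the
`j`-th lost position, satisfies `p - 1 ≥ j·d`. -/
def Pd (d : ℝ) (w : List Bool) : Prop :=
  ∀ p, Lost w p → (lostCount w p : ℝ) * d ≤ (p : ℝ) - 1

/-- The number of runs of `w`. -/
noncomputable def numRuns (w : List Bool) : ℕ := {ij : ℕ × ℕ | IsRun w ij.1 ij.2}.ncard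

/-- `ρ(n)`: the maximal number of runs in a binary word of length `n`. -/
noncomputable def rho (n : ℕ) : ℕ := sSup {k | ∃ w : List Bool, w.length = n ∧ numRuns w = k}

/-- The golden ratio. -/
noncomputable def goldenRatio' : ℝ := (1 + Real.sqrt 5) / 2

/-!
Take words `u` and `v` of lengths `m` and `n` with `ρ(m)` and `ρ(n)` runs. Every run of `u` yields a
run of `uv` (a run ending at `|u|` is extended to the right with the same period), and every run of
`v` that does not start at its first letter is shifted into a run of `uv`; all these runs of `uv`
are distinct. Hence `ρ(m) + ρ(n) ≤ ρ(m + n) + k`, where `k` counts the runs `[1..j]` of `v`. Their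
least periods are distinct, each is the root length `p` of a primitive square prefix with
`2p ≤ n`, and by the three-squares lemma any three of them `p < q < r` satisfy `p + q ≤ r`. So they
grow at least like the Fibonacci numbers, and `k ≤ log_φ n`.
-/

namespace List

variable {α : Type*}

def PrefixPeriodic (x : List α) (t p : ℕ) : Prop := ∀ k, k + p < t → x[k]? = x[k + p]?

namespace PrefixPeriodic

variable {x : List α} {t s p q : ℕ}

theorem mono (h : x.PrefixPeriodic t p) (hs : s ≤ t) : x.PrefixPeriodic s p :=
  fun k hk => h k (by omega)

theorem getElem?_mod (h : x.PrefixPeriodic t p) {k : ℕ} (hk : k < t) : x[k % p]? = x[k]? := by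
  rcases Nat.eq_zero_or_pos p with rfl | hp
  · rw [Nat.mod_zero]
  induction k using Nat.strong_induction_on with
  | _ k ih =>
    rcases lt_or_ge k p with hkp | hkp
    · rw [Nat.mod_eq_of_lt hkp]
    · have hk' := h (k - p) (by omega)
      rw [Nat.sub_add_cancel hkp] at hk'
      rw [Nat.mod_eq_sub_mod hkp, ih (k - p) (by omega) (by omega), hk']

theorem iff_hasPeriod_take (ht : t ≤ x.length) :
    x.PrefixPeriodic t p ↔ (x.take t).HasPeriod p := by
  rw [hasPeriod_iff_getElem?, length_take, min_eq_left ht]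
  refine forall_congr' fun k => ⟨fun h hk => ?_, fun h hk => ?_⟩
  · rw [getElem?_take_of_lt (by omega), getElem?_take_of_lt (by omega)]
    exact h (by omega)
  · have := h (by omega)
    rwa [getElem?_take_of_lt (by omega), getElem?_take_of_lt (by omega)] at this

theorem gcd (hp : x.PrefixPeriodic t p) (hq : x.PrefixPeriodic t q) (ht : t ≤ x.length)
    (hlen : p + q - p.gcd q ≤ t) : x.PrefixPeriodic t (p.gcd q) := by
  rw [iff_hasPeriod_take ht] at hp hq ⊢
  exact hp.gcd hq (by rw [length_take, min_eq_left ht]; exact hlen)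

theorem extend {ℓ : ℕ} (hq : x.PrefixPeriodic ℓ q) (hp : x.PrefixPeriodic t p) (hp1 : 1 ≤ p)
    (hℓ : p + q ≤ ℓ) : x.PrefixPeriodic t q := by
  intro k
  induction k using Nat.strong_induction_on with
  | _ k ih =>
    intro hk
    by_cases hkℓ : k + q < ℓ
    · exact hq k hkℓ
    have e1 := hp (k - p) (by omega)
    have e2 := hp (k - p + q) (by omega)
    rw [Nat.sub_add_cancel (by omega)] at e1
    rw [show k - p + q + p = k + q by omega] at e2
    rw [← e1, ← e2, ih (k - p) (by omega) (by omega)]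

theorem of_square_of_dvd (hsq : x.PrefixPeriodic (2 * p) p) (hq : x.PrefixPeriodic p q)
    (hdvd : q ∣ p) : x.PrefixPeriodic (2 * p) q := by
  intro k hk
  have hp : 0 < p := by omega
  have reduce : ∀ i < 2 * p, x[i]? = x[i % q]? := fun i hi => by
    rw [← hsq.getElem?_mod hi, ← hq.getElem?_mod (Nat.mod_lt i hp), Nat.mod_mod_of_dvd i hdvd]
  rw [reduce k (by omega), reduce (k + q) hk, Nat.add_mod_right]

end PrefixPeriodic

/-- `x` begins with a square `uu` where `|u| = p` and `u` is primitive. -/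
structure IsPrimitiveSquarePrefix (x : List α) (p : ℕ) : Prop where
  one_le : 1 ≤ p
  two_mul_le_length : 2 * p ≤ x.length
  periodic : x.PrefixPeriodic (2 * p) p
  le_of_periodic : ∀ q, 1 ≤ q → x.PrefixPeriodic (2 * p) q → p ≤ q

theorem IsPrimitiveSquarePrefix.le_of_dvd {x : List α} {p q : ℕ}
    (h : x.IsPrimitiveSquarePrefix p) (hq : x.PrefixPeriodic p q) (hdvd : q ∣ p) : p ≤ q :=
  h.le_of_periodic q (Nat.pos_of_dvd_of_pos hdvd h.one_le) (h.periodic.of_square_of_dvd hq hdvd)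

/-- The three-squares lemma of Crochemore and Rytter. -/
theorem IsPrimitiveSquarePrefix.three_squares {x : List α} {p q r : ℕ}
    (hp : x.IsPrimitiveSquarePrefix p) (hq : x.PrefixPeriodic (2 * q) q)
    (hr : x.PrefixPeriodic (2 * r) r) (hpq : p < q)    (hqr : q < r) : p + q ≤ r := by
  -- Write `q = p + e`, `r = q + d` and `p = f + d`. The prefix of length `p` has the periods `d`
  -- and `f`, hence `gcd f d`, which divides `p`: this contradicts the primitivity of the root.
  by_contra! hlt
  obtain ⟨e, rfl⟩ : ∃ e, q = p + e := ⟨q - p, by omega⟩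
  obtain ⟨d, rfl⟩ : ∃ d, r = p + e + d := ⟨r - (p + e), by omega⟩
  have hd : x.PrefixPeriodic (p + e) d := fun k hk => by
    rw [hr k (by omega), hq (k + d) (by omega)]; ac_rfl
  have hed : e < d := by
    by_contra! hde
    have := hp.le_of_periodic d (by omega) (hd.extend hp.periodic hp.one_le (by omega))
    omega
  obtain ⟨f, rfl⟩ : ∃ f, p = f + d := ⟨p - d, by omega⟩
  have hlen : f + d ≤ x.length := by have := hp.two_mul_le_length; omega
  have he : x.PrefixPeriodic (f + d) e := fun k hk => by
    rw [hq k (by omega), hp.periodic (k + e) (by omega)]; ac_rfl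
  have hf : x.PrefixPeriodic (f + d) f := by
    refine PrefixPeriodic.extend (fun k hk => ?_) he (by omega) le_rfl
    rw [hp.periodic k (by omega), hd (k + f) (by omega), ← add_assoc]
  have hgcd := hf.gcd (hd.mono (by omega)) hlen (by omega)
  have := hp.le_of_dvd hgcd (Nat.dvd_add (Nat.gcd_dvd_left f d) (Nat.gcd_dvd_right f d))
  have := Nat.gcd_le_left d (show 0 < f by omega)
  omega

end List

open Real
open scoped goldenRatio

theorem goldenRatio_pow_le_two_mul_fib (k : ℕ) : φ ^ k ≤ 2 * (Nat.fib (k + 1) : ℝ) := by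
  have hbinet := fib_succ_sub_goldenConj_mul_fib k
  have hmono : (Nat.fib k : ℝ) ≤ Nat.fib (k + 1) := by exact_mod_cast Nat.fib_le_fib_succ
  have hfib : (0 : ℝ) ≤ Nat.fib k := Nat.cast_nonneg _
  nlinarith [neg_one_lt_goldenConj, goldenConj_neg]

namespace Finset

variable {T : Finset ℕ}

theorem exists_fib_le_of_add_le (hT : ∀ a ∈ T, ∀ b ∈ T, ∀ c ∈ T, a < b → b < c → a + b ≤ c)
    (hpos : ∀ a ∈ T, 1 ≤ a) (k : ℕ) (hk : T.card = k + 2) :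
    ∃ a ∈ T, ∃ b ∈ T, a < b ∧ Nat.fib (k + 2) ≤ a ∧ Nat.fib (k + 3) ≤ b := by
  induction k generalizing T with
  | zero =>
    obtain ⟨a, b, hab, rfl⟩ := card_eq_two.1 hk
    have := hpos a (by simp)
    have := hpos b (by simp)
    have hfib : Nat.fib (0 + 2) = 1 ∧ Nat.fib (0 + 3) = 2 := ⟨rfl, rfl⟩
    rcases hab.lt_or_gt with h | h
    · exact ⟨a, by simp, b, by simp, h, by omega, by omega⟩
    · exact ⟨b, by simp, a, by simp, h, by omega, by omega⟩
  | succ k ih =>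
    have hne : T.Nonempty := by rw [← card_pos]; omega
    set M := T.max' hne
    have hM := max'_mem T hne
    have hsub : T.erase M ⊆ T := erase_subset M T
    obtain ⟨a, ha, b, hb, hab, hfa, hfb⟩ := ih (T := T.erase M)
      (fun a ha b hb c hc => hT a (hsub ha) b (hsub hb) c (hsub hc))
      (fun a ha => hpos a (hsub ha)) (by rw [card_erase_of_mem hM]; omega)
    have hbM : b < M := lt_of_le_of_ne (T.le_max' b (hsub hb)) (ne_of_mem_erase hb)
    have hsum := hT a (hsub ha) b (hsub hb) M hM hab hbM
    have hfib : Nat.fib (k + 1 + 3) = Nat.fib (k + 2) + Nat.fib (k + 3) := Nat.fib_add_two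
    exact ⟨b, hsub hb, M, hM, hbM, hfb, by omega⟩

theorem card_le_logb_goldenRatio (hT : ∀ a ∈ T, ∀ b ∈ T, ∀ c ∈ T, a < b → b < c → a + b ≤ c)
    (hpos : ∀ a ∈ T, 1 ≤ a) {n : ℕ} (hn : ∀ a ∈ T, 2 * a ≤ n) : (T.card : ℝ) ≤ logb φ n := by
  rcases T.eq_empty_or_nonempty with rfl | ⟨a, ha⟩
  · rw [card_empty, Nat.cast_zero]
    exact div_nonneg (log_natCast_nonneg n) (log_nonneg one_lt_goldenRatio.le)
  obtain ⟨b, hb, hfib⟩ : ∃ b ∈ T, Nat.fib (T.card + 1) ≤ b := by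
    rcases Nat.lt_or_ge T.card 2 with h | h
    · have : T.card = 1 := by have := card_pos.2 ⟨a, ha⟩; omega
      exact ⟨a, ha, by rw [this]; exact hpos a ha⟩
    · obtain ⟨-, -, b, hb, -, -, hfb⟩ := exists_fib_le_of_add_le hT hpos (T.card - 2) (by omega)
      exact ⟨b, hb, by rwa [show T.card - 2 + 3 = T.card + 1 by omega] at hfb⟩
  have hbn : 2 * (b : ℝ) ≤ n := by exact_mod_cast hn b hb
  have hb1 : (1 : ℝ) ≤ b := by exact_mod_cast hpos b hb
  have hfib' : (Nat.fib (T.card + 1) : ℝ) ≤ b := by exact_mod_cast hfib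
  rw [le_logb_iff_rpow_le one_lt_goldenRatio (by linarith), rpow_natCast]
  linarith [goldenRatio_pow_le_two_mul_fib T.card]

end Finset

theorem leastPeriod_isPeriod (w : List Bool) : IsPeriod w (leastPeriod w) :=
  Nat.sInf_mem (s := {p | IsPeriod w p}) ⟨w.length + 1, by omega, fun k hk => absurd hk (by omega)⟩

theorem leastPeriod_le {w : List Bool} {p : ℕ} (h : IsPeriod w p) : leastPeriod w ≤ p :=
  Nat.sInf_le h

theorem one_le_leastPeriod (w : List Bool) : 1 ≤ leastPeriod w := (leastPeriod_isPeriod w).1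

theorem IsPeriod.take {w : List Bool} {p : ℕ} (h : IsPeriod w p) (n : ℕ) :
    IsPeriod (w.take n) p := by
  refine ⟨h.1, fun k hk => ?_⟩
  simp only [List.length_take] at hk
  rw [List.getElem?_take_of_lt (by omega), List.getElem?_take_of_lt (by omega)]
  exact h.2 k (by omega)

theorem isPeriod_take_iff {x : List Bool} {t p : ℕ} (ht : t ≤ x.length) :
    IsPeriod (x.take t) p ↔ 1 ≤ p ∧ x.PrefixPeriodic t p := by
  rw [IsPeriod, List.length_take, min_eq_left ht]
  refine and_congr_right fun _ => forall_congr' fun k => imp_congr_right fun hk => ?_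
  rw [List.getElem?_take_of_lt (by omega), List.getElem?_take_of_lt hk]

theorem factor_one (w : List Bool) (j : ℕ) : factor w 1 j = w.take j := by
  simp [factor]

theorem getElem?_factor {w : List Bool} {i j k : ℕ} (hk : k < j + 1 - i) :
    (factor w i j)[k]? = w[i - 1 + k]? := by
  rw [factor, List.getElem?_take_of_lt hk, List.getElem?_drop]

theorem length_factor {w : List Bool} {i j : ℕ} (hi : 1 ≤ i) (hj : j ≤ w.length) :
    (factor w i j).length = j + 1 - i := by
  simp only [factor, List.length_take, List.length_drop]
  omega

theorem leastPeriod_factor_le_of_le (w : List Bool) {i j e : ℕ} (hje : j ≤ e) :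
    leastPeriod (factor w i j) ≤ leastPeriod (factor w i e) := by
  have hpre : factor w i j = (factor w i e).take (j + 1 - i) := by
    rw [factor, factor, List.take_take, min_eq_left (by omega)]
  rw [hpre]
  exact leastPeriod_le ((leastPeriod_isPeriod _).take _)

theorem IsPeriod.factor_succ {w : List Bool} {i e p : ℕ} (h : IsPeriod (factor w i e) p)
    (hi : 1 ≤ i) (he : e < w.length) (hpe : i + p ≤ e) (heq : w[e]? = w[e - p]?) :
    IsPeriod (factor w i (e + 1)) p := by
  refine ⟨h.1, fun k hk => ?_⟩
  rw [length_factor hi he] at hk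
  rw [getElem?_factor (by omega), getElem?_factor (by omega)]
  by_cases hke : k + p < e + 1 - i
  · have := h.2 k (by rw [length_factor hi he.le]; exact hke)
    rwa [getElem?_factor (by omega), getElem?_factor hke] at this
  · rw [show i - 1 + k = e - p by omega, show i - 1 + (k + p) = e by omega, heq]

theorem isPrimitiveSquarePrefix_of_isRun_one {v : List Bool} {j : ℕ} (h : IsRun v 1 j) :
    v.IsPrimitiveSquarePrefix (leastPeriod (v.take j)) := by
  obtain ⟨-, -, hjv, hsq, -, -⟩ := h
  rw [factor_one] at hsq
  obtain ⟨hp1, hper⟩ := (isPeriod_take_iff hjv).1 (leastPeriod_isPeriod (v.take j))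
  refine ⟨hp1, by omega, hper.mono (by omega), fun g hg1 hg => ?_⟩
  by_contra! hgp
  have := leastPeriod_le ((isPeriod_take_iff hjv).2 ⟨hg1, hg.extend hper hp1 (by omega)⟩)
  omega

theorem leastPeriod_take_ne_of_isRun_one {v : List Bool} {j₁ j₂ : ℕ} (h₁ : IsRun v 1 j₁)
    (h₂ : IsRun v 1 j₂) (hlt : j₁ < j₂) : leastPeriod (v.take j₁) ≠ leastPeriod (v.take j₂) := by
  intro hpe
  obtain ⟨-, -, -, hsq, -, hright⟩ := h₁
  rw [factor_one] at hsq hright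
  have hper : v.PrefixPeriodic j₂ (leastPeriod (v.take j₁)) := by
    rw [hpe]
    exact ((isPeriod_take_iff h₂.2.2.1).1 (leastPeriod_isPeriod _)).2
  have := hper (j₁ - leastPeriod (v.take j₁)) (by omega)
  rw [Nat.sub_add_cancel (by omega)] at this
  exact (hright.resolve_left (by have := h₂.2.2.1; omega)) this.symm

theorem ncard_isRun_one_le_logb (v : List Bool) :
    ({j | IsRun v 1 j}.ncard : ℝ) ≤ logb φ v.length := by
  classical
  have hfin : {j | IsRun v 1 j}.Finite := (Set.finite_Iic v.length).subset fun j hj => hj.2.2.1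
  set T := hfin.toFinset.image fun j => leastPeriod (v.take j)
  have hinj : Set.InjOn (fun j => leastPeriod (v.take j)) hfin.toFinset := by
    intro j₁ h₁ j₂ h₂ heq
    simp only [Set.Finite.coe_toFinset, Set.mem_ofPred_eq] at h₁ h₂
    by_contra hne
    rcases Nat.lt_or_gt_of_ne hne with h | h
    · exact leastPeriod_take_ne_of_isRun_one h₁ h₂ h heq
    · exact leastPeriod_take_ne_of_isRun_one h₂ h₁ h heq.symm
  have hsq : ∀ a ∈ T, v.IsPrimitiveSquarePrefix a := by
    simp only [T, Finset.mem_image, Set.Finite.mem_toFinset, Set.mem_ofPred_eq]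
    rintro _ ⟨j, hj, rfl⟩
    exact isPrimitiveSquarePrefix_of_isRun_one hj
  rw [Set.ncard_eq_toFinset_card _ hfin, ← Finset.card_image_of_injOn hinj]
  exact Finset.card_le_logb_goldenRatio
    (fun a ha b hb c hc hab hbc =>
      (hsq a ha).three_squares (hsq b hb).periodic (hsq c hc).periodic hab hbc)
    (fun a ha => (hsq a ha).one_le) (fun a ha => (hsq a ha).two_mul_le_length)

theorem factor_append_left (u v : List Bool) {i j : ℕ} (hi : 1 ≤ i) (hj : j ≤ u.length) :
    factor (u ++ v) i j = factor u i j := by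
  rcases Nat.lt_or_ge u.length (i - 1) with hlt | hle
  · simp [factor, show j + 1 - i = 0 by omega]
  rw [factor, factor, List.drop_append_of_le_length hle,
    List.take_append_of_le_length (by simp only [List.length_drop]; omega)]

theorem factor_append_right (u v : List Bool) {i j : ℕ} (hi : 1 ≤ i) :
    factor (u ++ v) (u.length + i) (u.length + j) = factor v i j := by
  rw [factor, factor, show u.length + i - 1 = u.length + (i - 1) by omega, List.drop_append,
    List.drop_eq_nil_of_le (by omega), List.nil_append, Nat.add_sub_cancel_left,
    show u.length + j + 1 - (u.length + i) = j + 1 - i by omega]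

theorem isRun_append_left {u : List Bool} (v : List Bool) {i j : ℕ} (h : IsRun u i j)
    (hj : j < u.length) : IsRun (u ++ v) i j := by
  obtain ⟨hi, hij, -, hsq, hleft, hright⟩ := h
  have hp := one_le_leastPeriod (factor u i j)
  rw [IsRun, factor_append_left u v hi hj.le]
  refine ⟨hi, hij, by simp only [List.length_append]; omega, hsq, ?_, Or.inr ?_⟩
  · refine hleft.imp_right fun hne => ?_
    rwa [List.getElem?_append_left (by omega), List.getElem?_append_left (by omega)]
  · rw [List.getElem?_append_left hj, List.getElem?_append_left (by omega)]
    exact hright.resolve_left hj.ne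

theorem isRun_append_right (u : List Bool) {v : List Bool} {i j : ℕ} (h : IsRun v i j)
    (hi : 2 ≤ i) : IsRun (u ++ v) (u.length + i) (u.length + j) := by
  obtain ⟨-, hij, hjv, hsq, hleft, hright⟩ := h
  have hp := one_le_leastPeriod (factor v i j)
  rw [IsRun, factor_append_right u v (by omega)]
  refine ⟨by omega, by omega, by simp only [List.length_append]; omega, by omega, Or.inr ?_, ?_⟩
  · rw [show u.length + i - 2 = u.length + (i - 2) by omega, add_assoc,
      List.getElem?_append_right (by omega), List.getElem?_append_right (by omega),
      Nat.add_sub_cancel_left, Nat.add_sub_cancel_left]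
    exact hleft.resolve_left (by omega)
  · refine hright.imp (by simp only [List.length_append]; omega) fun hne => ?_
    rw [show u.length + j - _ = u.length + (j - leastPeriod (factor v i j)) by omega,
      List.getElem?_append_right (by omega), List.getElem?_append_right (by omega),
      Nat.add_sub_cancel_left, Nat.add_sub_cancel_left]
    exact hne

noncomputable def extendedEnd (u v : List Bool) (i : ℕ) : ℕ :=
  sSup {e | u.length ≤ e ∧ e ≤ (u ++ v).length ∧
    IsPeriod (factor (u ++ v) i e) (leastPeriod (factor u i u.length))}

theorem isRun_extendedEnd {u : List Bool} (v : List Bool) {i : ℕ} (h : IsRun u i u.length) :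
    IsRun (u ++ v) i (extendedEnd u v i) ∧ u.length ≤ extendedEnd u v i := by
  obtain ⟨hi, hiu, -, hsq, hleft, -⟩ := h
  set p := leastPeriod (factor u i u.length) with hp_def
  have hp := one_le_leastPeriod (factor u i u.length)
  set S := {e | u.length ≤ e ∧ e ≤ (u ++ v).length ∧ IsPeriod (factor (u ++ v) i e) p}
  have hbdd : BddAbove S := ⟨(u ++ v).length, fun e he => he.2.1⟩
  have hmem : u.length ∈ S := by
    refine ⟨le_rfl, by simp, ?_⟩
    rw [factor_append_left u v hi le_rfl]
    exact leastPeriod_isPeriod _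
  obtain ⟨hue, hev, hper⟩ : extendedEnd u v i ∈ S := Nat.sSup_mem ⟨_, hmem⟩ hbdd
  set e := extendedEnd u v i
  have hLP : leastPeriod (factor (u ++ v) i e) = p := by
    refine le_antisymm (leastPeriod_le hper) ?_
    rw [hp_def, ← factor_append_left u v hi le_rfl]
    exact leastPeriod_factor_le_of_le _ hue
  refine ⟨⟨hi, by omega, hev, by rw [hLP]; omega, ?_, ?_⟩, hue⟩
  · rw [hLP]
    refine hleft.imp_right fun hne => ?_
    rwa [List.getElem?_append_left (by omega), List.getElem?_append_left (by omega)]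
  · rw [hLP, or_iff_not_imp_left]
    intro hlt heq
    have hsucc : e + 1 ∈ S :=
      ⟨by omega, by omega, hper.factor_succ hi (by omega) (by omega) heq⟩
    have : e + 1 ≤ sSup S := le_csSup hbdd hsucc
    exact absurd this (by change ¬ e + 1 ≤ e; omega)

def runs (w : List Bool) : Set (ℕ × ℕ) := {ij | IsRun w ij.1 ij.2}

theorem runs_subset (w : List Bool) : runs w ⊆ Set.Iic w.length ×ˢ Set.Iic w.length :=
  fun _ h => ⟨(h.2.1.trans_le h.2.2.1).le, h.2.2.1⟩

theorem runs_finite (w : List Bool) : (runs w).Finite :=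
  ((Set.finite_Iic _).prod (Set.finite_Iic _)).subset (runs_subset w)

noncomputable def extendRun (u v : List Bool) (ij : ℕ × ℕ) : ℕ × ℕ :=
  (ij.1, if ij.2 < u.length then ij.2 else extendedEnd u v ij.1)

theorem mapsTo_extendRun (u v : List Bool) :
    Set.MapsTo (extendRun u v) (runs u) (runs (u ++ v)) := by
  rintro ⟨i, j⟩ h
  by_cases hj : j < u.length
  · simpa [extendRun, runs, hj] using isRun_append_left v h hj
  · obtain rfl : j = u.length := by have := h.2.2.1; omega
    simpa [extendRun, runs] using (isRun_extendedEnd v h).1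

theorem injOn_extendRun (u v : List Bool) : Set.InjOn (extendRun u v) (runs u) := by
  rintro ⟨i, j⟩ h ⟨i', j'⟩ h' heq
  simp only [extendRun, Prod.mk.injEq] at heq
  obtain ⟨rfl, heq⟩ := heq
  have := h.2.2.1
  have := h'.2.2.1
  split_ifs at heq with hj hj'
  · rw [heq]
  · obtain rfl : j' = u.length := by omega
    have := (isRun_extendedEnd (i := i) v h').2
    omega
  · obtain rfl : j = u.length := by omega
    have := (isRun_extendedEnd (i := i) v h).2
    omega
  · congr
    omega

theorem ncard_runs_add_le (u v : List Bool) :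
    (runs u).ncard + (runs v ∩ {ij | 2 ≤ ij.1}).ncard ≤ (runs (u ++ v)).ncard := by
  let shift : ℕ × ℕ → ℕ × ℕ := fun ij => (u.length + ij.1, u.length + ij.2)
  have hshift : Set.MapsTo shift (runs v ∩ {ij | 2 ≤ ij.1}) (runs (u ++ v)) :=
    fun ij h => isRun_append_right u h.1 h.2
  have hshift_inj : shift.Injective := fun a b h => by
    simp only [shift, Prod.mk.injEq, Nat.add_left_cancel_iff] at h
    exact Prod.ext h.1 h.2
  have hdisj : Disjoint (extendRun u v '' runs u) (shift '' (runs v ∩ {ij | 2 ≤ ij.1})) := by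
    rw [Set.disjoint_left]
    rintro _ ⟨ij, h, rfl⟩ ⟨kl, hkl, heq⟩
    have := congrArg Prod.fst heq
    have := h.2.1.trans_le h.2.2.1
    have : 2 ≤ kl.1 := hkl.2
    simp only [extendRun, shift] at *
    omega
  calc (runs u).ncard + (runs v ∩ {ij | 2 ≤ ij.1}).ncard
      = (extendRun u v '' runs u ∪ shift '' (runs v ∩ {ij | 2 ≤ ij.1})).ncard := by
        rw [Set.ncard_union_eq hdisj ((runs_finite u).image _)
          (((runs_finite v).inter_of_left _).image _), (injOn_extendRun u v).ncard_image,
          Set.ncard_image_of_injective _ hshift_inj]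
    _ ≤ (runs (u ++ v)).ncard :=
        Set.ncard_le_ncard (Set.union_subset (mapsTo_extendRun u v).image_subset
          hshift.image_subset) (runs_finite _)

theorem numRuns_add_le (u v : List Bool) :
    numRuns u + numRuns v ≤ numRuns (u ++ v) + {j | IsRun v 1 j}.ncard := by
  have hsplit : runs v = (runs v ∩ {ij | 2 ≤ ij.1}) ∪ Prod.mk 1 '' {j | IsRun v 1 j} := by
    ext ⟨i, j⟩
    constructor
    · intro h
      rcases (show i = 1 ∨ 2 ≤ i by have := h.1; omega) with rfl | hi
      · exact Or.inr ⟨j, h, rfl⟩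
      · exact Or.inl ⟨h, hi⟩
    · rintro (h | ⟨j, h, ⟨⟩⟩)
      exacts [h.1, h]
  have hv : numRuns v ≤ (runs v ∩ {ij | 2 ≤ ij.1}).ncard + {j | IsRun v 1 j}.ncard := by
    calc numRuns v = ((runs v ∩ {ij | 2 ≤ ij.1}) ∪ Prod.mk 1 '' {j | IsRun v 1 j}).ncard :=
          congrArg Set.ncard hsplit
      _ ≤ _ := Set.ncard_union_le _ _
      _ = _ := by rw [Set.ncard_image_of_injective _ (Prod.mk_right_injective 1)]
  have := ncard_runs_add_le u v
  change (runs u).ncard + _ ≤ (runs (u ++ v)).ncard + _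
  omega

theorem bddAbove_numRuns (n : ℕ) : BddAbove {k | ∃ w : List Bool, w.length = n ∧ numRuns w = k} :=
  ⟨(Set.Iic n ×ˢ Set.Iic n).ncard, by
    rintro _ ⟨w, rfl, rfl⟩
    exact (Set.ncard_le_ncard (runs_subset w) ((Set.finite_Iic _).prod (Set.finite_Iic _)) :
      (runs w).ncard ≤ _)⟩

theorem numRuns_le_rho (w : List Bool) : numRuns w ≤ rho w.length :=
  le_csSup (bddAbove_numRuns _) ⟨w, rfl, rfl⟩

theorem exists_numRuns_eq_rho (n : ℕ) : ∃ w : List Bool, w.length = n ∧ numRuns w = rho n :=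
  Nat.sSup_mem (s := {k | ∃ w : List Bool, w.length = n ∧ numRuns w = k})
    ⟨_, List.replicate n false, List.length_replicate, rfl⟩ (bddAbove_numRuns n)

theorem rho_almost_superadditive_general (n m : ℕ) :
    (rho n : ℝ) + (rho m : ℝ) - Real.logb goldenRatio' n ≤ (rho (m + n) : ℝ) := by
  obtain ⟨u, rfl, hu⟩ := exists_numRuns_eq_rho m
  obtain ⟨v, rfl, hv⟩ := exists_numRuns_eq_rho n
  have hsplit : (numRuns u + numRuns v : ℝ) ≤ numRuns (u ++ v) + {j | IsRun v 1 j}.ncard := by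
    exact_mod_cast numRuns_add_le u v
  have hmax : (numRuns (u ++ v) : ℝ) ≤ rho (u.length + v.length) := by
    exact_mod_cast List.length_append ▸ numRuns_le_rho (u ++ v)
  have hstart := ncard_isRun_one_le_logb v
  rw [← hu, ← hv, show goldenRatio' = Real.goldenRatio from rfl]
  linarith

/-- `ρ(n) + ρ(m) - log_φ n ≤ ρ(m + n)` for `1 ≤ n ≤ m`. -/
theorem rho_almost_superadditive (n m : ℕ) (hn : 1 ≤ n) (hnm : n ≤ m) :
    (rho n : ℝ) + (rho m : ℝ) - Real.logb goldenRatio' n ≤ (rho (m + n) : ℝ) :=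
  rho_almost_superadditive_general n m
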